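/- arXiv:2407.06777 — 4 statements merged into one kernel-verified Lean document; each statement's English description precedes it below -/
import Mathlib

section
/- Let H = (V, E) be a hypergraph of rank 2, i.e. every edge has size at most 2. Then Client has a winning strategy in the Client-Waiter game on H if and only if H has an edge of size at most 1, or H has two distinct edges that share a common vertex. -/
/-!
Client wins from an edge `e` once he owns all of `e` but one vertex that is still free: he takes
that vertex when it is offered. Given two edges `{v, a}` and `{v, b}` with all three vertices free,
he takes the first vertex of them that Waiter offers, preferring `v`; afterwards one of the two
edges is in the previous situation.

Conversely, if the edges are pairwise disjoint pairs, Waiter offers both vertices of an untouched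
edge as long as there is one. Client gets one of them and Waiter the other, so in the end every
edge contains a vertex of Waiter.
-/

variable {α : Type*} [DecidableEq α]

lemma card_sdiff_pair_lt {U : Finset α} {x y : α} (hx : x ∈ U) :
    (U \ {x, y}).card < U.card :=
  lt_of_le_of_lt
    (Finset.card_le_card (by
      intro a ha
      simp only [Finset.mem_sdiff, Finset.mem_insert, Finset.mem_singleton,
        Finset.mem_erase] at ha ⊢
      tauto))
    (Finset.card_erase_lt_of_mem hx)

/-- Client-Waiter game played on the edge set `E`: Client has a winning strategy from the
position in which `U` is the set of unclaimed vertices and `C` is the set of vertices already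
claimed by Client.  While at least two vertices are unclaimed, Waiter offers two distinct
unclaimed vertices `x, y`; Client claims one of them and Waiter gets the other.  A last
remaining unclaimed vertex goes to Client.  Client wins if at the end his vertices contain an
edge of `E`. -/
def CWClientWins (E : Set (Finset α)) (U C : Finset α) : Prop :=
  if _h : 2 ≤ U.card then
    ∀ x ∈ U, ∀ y ∈ U, x ≠ y →
      CWClientWins E (U \ {x, y}) (insert x C) ∨ CWClientWins E (U \ {x, y}) (insert y C)
  else ∃ e ∈ E, e ⊆ C ∪ U
termination_by U.card
decreasing_by all_goals exact card_sdiff_pair_lt (by assumption)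

open Finset

lemma union_erase_subset_insert_union_sdiff_pair {U C : Finset α} {x y : α} :
    C ∪ U.erase y ⊆ insert x C ∪ U \ {x, y} := by
  intro w
  simp only [mem_union, mem_erase, mem_insert, mem_sdiff, mem_singleton]
  tauto

lemma insert_union_sdiff_subset {U C : Finset α} {x : α} (hx : x ∈ U) (s : Finset α) :
    insert x C ∪ U \ s ⊆ C ∪ U :=
  union_subset (insert_subset (mem_union_right C hx) subset_union_left)
    (sdiff_subset.trans subset_union_right)

lemma exists_eq_pair_of_mem_of_card_eq_two {s : Finset α} {v : α} (hs : #s = 2) (hv : v ∈ s) :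
    ∃ a, v ≠ a ∧ s = {v, a} := by
  obtain ⟨a, ha⟩ := card_eq_one.1 (by rw [card_erase_of_mem hv, hs] : #(s.erase v) = 1)
  refine ⟨a, fun hva => ?_, by rw [← insert_erase hv, ha]⟩
  exact ne_of_mem_erase (ha ▸ mem_singleton_self a) hva.symm

section ClientWins

variable {E : Set (Finset α)} {e : Finset α} {v w x y a b : α}

theorem cwClientWins_of_card_sdiff_le_one {U C : Finset α} (he : e ∈ E) (hsub : e ⊆ C ∪ U)
    (hres : #(e \ C) ≤ 1) : CWClientWins E U C := by
  rw [CWClientWins]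
  split
  · intro x hx y hy hxy
    by_cases hye : y ∈ e \ C
    · have hey : e ⊆ insert y C := fun w hw => by
        by_cases hwC : w ∈ C
        · exact mem_insert_of_mem hwC
        · exact mem_insert.2 (Or.inl (card_le_one.1 hres w (mem_sdiff.2 ⟨hw, hwC⟩) y hye))
      refine Or.inr (cwClientWins_of_card_sdiff_le_one he (hey.trans subset_union_left) ?_)
      simp [sdiff_eq_empty_iff_subset.2 hey]
    · have hey : e ⊆ C ∪ U.erase y := fun w hw => by
        by_cases hwC : w ∈ C
        · exact mem_union_left _ hwC
        · have hwy : w ≠ y := by rintro rfl; exact hye (mem_sdiff.2 ⟨hw, hwC⟩)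
          exact mem_union_right _ (mem_erase.2 ⟨hwy, (mem_union.1 (hsub hw)).resolve_left hwC⟩)
      exact Or.inl (cwClientWins_of_card_sdiff_le_one he
        (hey.trans union_erase_subset_insert_union_sdiff_pair)
        ((card_le_card (sdiff_subset_sdiff subset_rfl (subset_insert x C))).trans hres))
  · exact ⟨e, he, hsub⟩
termination_by #U
decreasing_by all_goals exact card_sdiff_pair_lt hx

theorem cwClientWins_sdiff_pair_insert_of_pair_mem {U C : Finset α} (he : {x, w} ∈ E)
    (hw : w ∈ U) (hwy : w ≠ y) : CWClientWins E (U \ {x, y}) (insert x C) := by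
  refine cwClientWins_of_card_sdiff_le_one he ?_ (card_le_one.2 ?_)
  · refine insert_subset (mem_union_left _ (mem_insert_self x C)) (singleton_subset_iff.2 ?_)
    exact union_erase_subset_insert_union_sdiff_pair (mem_union_right _ (mem_erase.2 ⟨hwy, hw⟩))
  · simp only [mem_sdiff, mem_insert, mem_singleton]
    grind

theorem cwClientWins_sdiff_pair_insert_of_mem_triple {U C : Finset α} (hab : a ≠ b)
    (ha : {v, a} ∈ E) (hb : {v, b} ∈ E) (hU : {v, a, b} ⊆ U)
    (hx : x = v ∨ ((x = a ∨ x = b) ∧ y ≠ v)) : CWClientWins E (U \ {x, y}) (insert x C) := by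
  have hvU : v ∈ U := hU (by simp)
  have haU : a ∈ U := hU (by simp)
  have hbU : b ∈ U := hU (by simp)
  rcases hx with rfl | ⟨rfl | rfl, hyv⟩
  · by_cases hya : y = a
    · exact cwClientWins_sdiff_pair_insert_of_pair_mem hb hbU (by rintro rfl; exact hab hya.symm)
    · exact cwClientWins_sdiff_pair_insert_of_pair_mem ha haU (Ne.symm hya)
  · exact cwClientWins_sdiff_pair_insert_of_pair_mem (pair_comm v x ▸ ha) hvU (Ne.symm hyv)
  · exact cwClientWins_sdiff_pair_insert_of_pair_mem (pair_comm v x ▸ hb) hvU (Ne.symm hyv)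

theorem cwClientWins_of_pair_mem_of_pair_mem {U C : Finset α} (hva : v ≠ a) (hab : a ≠ b)
    (ha : {v, a} ∈ E) (hb : {v, b} ∈ E) (hU : {v, a, b} ⊆ U) : CWClientWins E U C := by
  rw [CWClientWins]
  split
  · intro x hx y hy hxy
    by_cases hxT : x = v ∨ ((x = a ∨ x = b) ∧ y ≠ v)
    · exact Or.inl (cwClientWins_sdiff_pair_insert_of_mem_triple hab ha hb hU hxT)
    by_cases hyT : y = v ∨ ((y = a ∨ y = b) ∧ x ≠ v)
    · rw [pair_comm x y]
      exact Or.inr (cwClientWins_sdiff_pair_insert_of_mem_triple hab ha hb hU hyT)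
    have hU' : {v, a, b} ⊆ U \ {x, y} := by
      refine subset_sdiff.2 ⟨hU, ?_⟩
      simp only [disjoint_insert_left, disjoint_singleton_left, mem_insert, mem_singleton]
      grind
    exact Or.inl (cwClientWins_of_pair_mem_of_pair_mem hva hab ha hb hU')
  · rename_i hU2
    have hvaU : {v, a} ⊆ U := insert_subset (hU (by simp)) (singleton_subset_iff.2 (hU (by simp)))
    exact absurd (card_pair hva ▸ card_le_card hvaU) hU2
termination_by #U
decreasing_by exact card_sdiff_pair_lt hx

end ClientWins

section WaiterWins

variable {E : Set (Finset α)}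

/-- Waiter owns exactly the vertices outside `C ∪ U`. -/
def AllEdgesFreshOrBlocked (E : Set (Finset α)) (U C : Finset α) : Prop :=
  ∀ e ∈ E, (e ⊆ U ∧ Disjoint e C) ∨ ¬ e ⊆ C ∪ U

theorem AllEdgesFreshOrBlocked.exists_offer {U C : Finset α} (hcard : ∀ e ∈ E, #e = 2)
    (hdisj : E.Pairwise Disjoint) (h : AllEdgesFreshOrBlocked E U C) (hU : 2 ≤ #U) :
    ∃ x ∈ U, ∃ y ∈ U, x ≠ y ∧
      ∀ z ∈ ({x, y} : Finset α), AllEdgesFreshOrBlocked E (U \ {x, y}) (insert z C) := by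
  by_cases hfresh : ∃ e ∈ E, e ⊆ U ∧ Disjoint e C
  · obtain ⟨e, he, heU, heC⟩ := hfresh
    obtain ⟨x, y, hxy, rfl⟩ := card_eq_two.1 (hcard e he)
    refine ⟨x, heU (mem_insert_self x {y}), y, heU (by simp), hxy, fun z hz f hf => ?_⟩
    by_cases hfe : f = {x, y}
    · subst hfe
      refine Or.inr fun hsub => ?_
      have hxC : x ∉ C := disjoint_left.1 heC (mem_insert_self x {y})
      have hyC : y ∉ C := disjoint_left.1 heC (by simp)
      have hx' := hsub (mem_insert_self x {y})
      have hy' := hsub (by simp : y ∈ ({x, y} : Finset α))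
      simp only [mem_union, mem_insert, mem_sdiff, mem_singleton] at hz hx' hy'
      grind
    · have hfxy : Disjoint f {x, y} := hdisj hf he hfe
      rcases h f hf with ⟨hfU, hfC⟩ | hf'
      · exact Or.inl ⟨subset_sdiff.2 ⟨hfU, hfxy⟩,
          disjoint_insert_right.2 ⟨fun hzf => disjoint_left.1 hfxy hzf hz, hfC⟩⟩
      · exact Or.inr fun hsub => hf' (hsub.trans (insert_union_sdiff_subset (heU hz) _))
  · push Not at hfresh
    obtain ⟨x, hx, y, hy, hxy⟩ := one_lt_card.1 hU
    refine ⟨x, hx, y, hy, hxy, fun z hz f hf => Or.inr fun hsub => ?_⟩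
    have hzU : z ∈ U := by
      rcases mem_insert.1 hz with rfl | hz
      · exact hx
      · exact mem_singleton.1 hz ▸ hy
    rcases h f hf with ⟨hfU, hfC⟩ | hf'
    · exact hfresh f hf hfU hfC
    · exact hf' (hsub.trans (insert_union_sdiff_subset hzU _))

theorem not_cwClientWins_of_allEdgesFreshOrBlocked (hcard : ∀ e ∈ E, #e = 2)
    (hdisj : E.Pairwise Disjoint) {U C : Finset α} (h : AllEdgesFreshOrBlocked E U C) :
    ¬ CWClientWins E U C := by
  rw [CWClientWins]
  split
  · rename_i hU
    obtain ⟨x, hx, y, hy, hxy, hnext⟩ := h.exists_offer hcard hdisj hU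
    intro hwin
    rcases hwin x hx y hy hxy with hwin | hwin
    · exact not_cwClientWins_of_allEdgesFreshOrBlocked hcard hdisj (hnext x (by simp)) hwin
    · exact not_cwClientWins_of_allEdgesFreshOrBlocked hcard hdisj (hnext y (by simp)) hwin
  · rename_i hU
    rintro ⟨e, he, heCU⟩
    rcases h e he with ⟨heU, -⟩ | hblocked
    · exact hU (hcard e he ▸ card_le_card heU)
    · exact hblocked heCU
termination_by #U
decreasing_by all_goals exact card_sdiff_pair_lt hx

end WaiterWins

/-- In a rank-`2` hypergraph `H = (V, E)`, Client has a winning strategy in the Client-Waiter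
game if and only if `H` has an edge of size at most `1` or two distinct intersecting edges. -/
theorem cw_client_rank_two (V : Finset α) (E : Set (Finset α)) (hEV : ∀ e ∈ E, e ⊆ V)
    (hrank : ∀ e ∈ E, e.card ≤ 2) :
    CWClientWins E V ∅ ↔
      (∃ e ∈ E, e.card ≤ 1) ∨ ∃ e₁ ∈ E, ∃ e₂ ∈ E, e₁ ≠ e₂ ∧ (e₁ ∩ e₂).Nonempty := by
  by_cases hsmall : ∃ e ∈ E, #e ≤ 1
  · obtain ⟨e, he, hcard⟩ := hsmall
    refine iff_of_true ?_ (Or.inl ⟨e, he, hcard⟩)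
    exact cwClientWins_of_card_sdiff_le_one (U := V) (C := ∅) he (by simpa using hEV e he)
      (by simpa using hcard)
  push Not at hsmall
  have hcard : ∀ e ∈ E, #e = 2 := fun e he => le_antisymm (hrank e he) (hsmall e he)
  simp only [not_exists.2 fun e => not_and.2 fun he => (hsmall e he).not_ge, false_or]
  constructor
  · intro hwin
    by_contra! hdisj
    exact not_cwClientWins_of_allEdgesFreshOrBlocked hcard
      (fun e₁ he₁ e₂ he₂ hne => disjoint_iff_inter_eq_empty.2 (hdisj e₁ he₁ e₂ he₂ hne))
      (fun e he => Or.inl ⟨hEV e he, disjoint_empty_right e⟩) hwin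
  · rintro ⟨e₁, he₁, e₂, he₂, hne, v, hv⟩
    obtain ⟨a, hva, rfl⟩ := exists_eq_pair_of_mem_of_card_eq_two (hcard e₁ he₁) (mem_inter.1 hv).1
    obtain ⟨b, -, rfl⟩ := exists_eq_pair_of_mem_of_card_eq_two (hcard e₂ he₂) (mem_inter.1 hv).2
    refine cwClientWins_of_pair_mem_of_pair_mem hva (by rintro rfl; exact hne rfl) he₁ he₂ ?_
    exact insert_subset (hEV _ he₁ (mem_insert_self v _))
      (insert_subset (hEV _ he₁ (by simp)) (singleton_subset_iff.2 (hEV _ he₂ (by simp))))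
end

section
/- For every integer k ≥ 1 there exists a function mc_k : ℕ → ℕ such that for every k-uniform hypergraph H and every integer ℓ ≥ 1, the number of distinct sets C that are centers of minimal ℓ-sunflowers of H is at most mc_k(ℓ). -/
section Defs

variable {α : Type*} [DecidableEq α]

/-- `S` is an `ℓ`-sunflower of the edge set `E` with center `C`: a tuple of `ℓ` edges
(repetitions allowed) all containing `C` and pairwise intersecting exactly in `C`. -/
def IsSunflower (E : Set (Finset α)) (ℓ : ℕ) (C : Finset α) (S : Fin ℓ → Finset α) : Prop :=
  (∀ i, S i ∈ E) ∧ (∀ i, C ⊆ S i) ∧ ∀ i j, i ≠ j → S i ∩ S j = C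

/-- `C` is the center of some `ℓ`-sunflower of `E`. -/
def IsCenter (E : Set (Finset α)) (ℓ : ℕ) (C : Finset α) : Prop :=
  ∃ S, IsSunflower E ℓ C S

/-- `C` is the center of a minimal `ℓ`-sunflower of `E`: no `ℓ`-sunflower of `E` has a center
strictly contained in `C`. -/
def IsMinCenter (E : Set (Finset α)) (ℓ : ℕ) (C : Finset α) : Prop :=
  IsCenter E ℓ C ∧ ∀ C' : Finset α, C' ⊂ C → ¬ IsCenter E ℓ C'

end Defs


open Finset

variable {α : Type*} [DecidableEq α]

/-- Erdős–Rado sunflower lemma. -/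
theorem erdos_rado_sunflower (t : ℕ) :
    ∀ (k : ℕ) (𝔉 : Finset (Finset α)), (∀ s ∈ 𝔉, s.card = k) →
      k.factorial * (t - 1) ^ k < 𝔉.card →
      ∃ Y : Finset α, ∃ 𝒮 ⊆ 𝔉, 𝒮.card = t ∧ (∀ s ∈ 𝒮, Y ⊆ s) ∧
        ∀ s ∈ 𝒮, ∀ s' ∈ 𝒮, s ≠ s' → s ∩ s' = Y := by
  classical
  intro k
  induction k with
  | zero =>
    intro 𝔉 hcard hbig
    exfalso
    have h1 : 𝔉 ⊆ {∅} := by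
      intro s hs
      simp [Finset.card_eq_zero.mp (hcard s hs)]
    have := Finset.card_le_card h1
    simp at this hbig
    omega
  | succ k ih =>
    intro 𝔉 hcard hbig
    by_cases hdisj : ∃ 𝒮 ⊆ 𝔉, 𝒮.card = t ∧
        ∀ s ∈ 𝒮, ∀ s' ∈ 𝒮, s ≠ s' → s ∩ s' = ∅
    · obtain ⟨𝒮, h𝒮, hcard𝒮, hpw⟩ := hdisj
      exact ⟨∅, 𝒮, h𝒮, hcard𝒮, fun s _ => empty_subset s, hpw⟩
    · -- maximal pairwise disjoint subfamily
      set P : Finset (Finset α) → Prop :=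
        fun D => D ⊆ 𝔉 ∧ ∀ s ∈ D, ∀ s' ∈ D, s ≠ s' → s ∩ s' = ∅ with hP
      have hPne : (𝔉.powerset.filter P).Nonempty := by
        refine ⟨∅, ?_⟩
        simp [hP]
      obtain ⟨𝒟, h𝒟mem, h𝒟max⟩ := Finset.exists_max_image _ Finset.card hPne
      rw [Finset.mem_filter, Finset.mem_powerset] at h𝒟mem
      obtain ⟨h𝒟sub, h𝒟P⟩ := h𝒟mem
      simp only [hP] at h𝒟P
      obtain ⟨h𝒟sub', h𝒟pw⟩ := h𝒟P
      have h𝒟card : 𝒟.card ≤ t - 1 := by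
        by_contra hc
        push_neg at hc
        have ht : t ≤ 𝒟.card := by omega
        obtain ⟨𝒮, h𝒮sub, h𝒮card⟩ := Finset.exists_subset_card_eq ht
        exact hdisj ⟨𝒮, h𝒮sub.trans h𝒟sub', h𝒮card,
          fun s hs s' hs' hne => h𝒟pw s (h𝒮sub hs) s' (h𝒮sub hs') hne⟩
      set A : Finset α := 𝒟.biUnion id with hA
      have hAcard : A.card ≤ (t - 1) * (k + 1) := by
        calc A.card ≤ ∑ s ∈ 𝒟, s.card := Finset.card_biUnion_le
        _ ≤ ∑ _s ∈ 𝒟, (k+1) := by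
            apply Finset.sum_le_sum
            intro s hs
            exact le_of_eq (hcard s (h𝒟sub' hs))
        _ = 𝒟.card * (k+1) := by rw [Finset.sum_const, smul_eq_mul]
        _ ≤ (t-1) * (k+1) := by exact Nat.mul_le_mul_right _ h𝒟card
      have hmeet : ∀ s ∈ 𝔉, (s ∩ A).Nonempty := by
        intro s hs
        rcases Finset.eq_empty_or_nonempty (s ∩ A) with he | hne
        · exfalso
          have hsnotin : s ∉ 𝒟 := by
            intro hsin
            have : s ⊆ A := fun x hx => Finset.mem_biUnion.mpr ⟨s, hsin, hx⟩
            have hs0 : s ∩ A = s := Finset.inter_eq_left.mpr this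
            have : s.card = 0 := by rw [← hs0, he]; simp
            rw [hcard s hs] at this; omega
          have hnew : P (insert s 𝒟) := by
            constructor
            · exact Finset.insert_subset hs h𝒟sub'
            · intro a ha b hb hne
              have key : ∀ c ∈ 𝒟, s ∩ c = ∅ := by
                intro c hc
                have hcA : c ⊆ A := fun y hy => Finset.mem_biUnion.mpr ⟨c, hc, hy⟩
                have h1 : s ∩ c ⊆ s ∩ A :=
                  Finset.inter_subset_inter (Finset.Subset.refl s) hcA
                rw [he] at h1
                exact Finset.subset_empty.mp h1
              by_cases ha' : a ∈ 𝒟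
              · by_cases hb' : b ∈ 𝒟
                · exact h𝒟pw a ha' b hb' hne
                · have hbs : b = s := by
                    rcases Finset.mem_insert.mp hb with h | h
                    · exact h
                    · exact absurd h hb'
                  subst hbs
                  rw [Finset.inter_comm]
                  exact key a ha'
              · have has : a = s := by
                  rcases Finset.mem_insert.mp ha with h | h
                  · exact h
                  · exact absurd h ha'
                subst has
                have hb' : b ∈ 𝒟 := by
                  rcases Finset.mem_insert.mp hb with h | h
                  · exact absurd h hne.symm
                  · exact h
                exact key b hb'
          have hmem' : insert s 𝒟 ∈ 𝔉.powerset.filter P := by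
            rw [Finset.mem_filter, Finset.mem_powerset]
            exact ⟨Finset.insert_subset hs h𝒟sub', hnew⟩
          have := h𝒟max _ hmem'
          rw [Finset.card_insert_of_notMem hsnotin] at this
          omega
        · exact hne
      -- pigeonhole
      have hpig : ∃ x ∈ A, k.factorial * (t-1)^k < (𝔉.filter (x ∈ ·)).card := by
        by_contra hc
        push_neg at hc
        have hsub : 𝔉 ⊆ A.biUnion (fun x => 𝔉.filter (x ∈ ·)) := by
          intro s hs
          obtain ⟨x, hx⟩ := hmeet s hs
          rw [Finset.mem_inter] at hx
          exact Finset.mem_biUnion.mpr ⟨x, hx.2, Finset.mem_filter.mpr ⟨hs, hx.1⟩⟩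
        have : 𝔉.card ≤ (t-1) * (k+1) * (k.factorial * (t-1)^k) := by
          calc 𝔉.card ≤ (A.biUnion (fun x => 𝔉.filter (x ∈ ·))).card :=
              Finset.card_le_card hsub
          _ ≤ ∑ x ∈ A, (𝔉.filter (x ∈ ·)).card := Finset.card_biUnion_le
          _ ≤ ∑ _x ∈ A, k.factorial * (t-1)^k := Finset.sum_le_sum (fun x hx => hc x hx)
          _ = A.card * (k.factorial * (t-1)^k) := by rw [Finset.sum_const, smul_eq_mul]
          _ ≤ (t-1) * (k+1) * (k.factorial * (t-1)^k) :=
              Nat.mul_le_mul_right _ hAcard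
        have heq : (t-1) * (k+1) * (k.factorial * (t-1)^k)
            = (k+1).factorial * (t-1)^(k+1) := by
          rw [Nat.factorial_succ, pow_succ]
          ring
        rw [heq] at this
        omega
      obtain ⟨x, _hxA, hx⟩ := hpig
      set 𝔊 : Finset (Finset α) := (𝔉.filter (x ∈ ·)).image (Finset.erase · x) with h𝔊
      have hinjer : Set.InjOn (Finset.erase · x) (𝔉.filter (x ∈ ·)) := by
        intro a ha b hb hab
        simp only [Finset.coe_filter, Set.mem_setOf_eq] at ha hb
        have := congrArg (insert x) hab
        rwa [Finset.insert_erase ha.2, Finset.insert_erase hb.2] at this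
      have h𝔊card : 𝔊.card = (𝔉.filter (x ∈ ·)).card := Finset.card_image_of_injOn hinjer
      have h𝔊unif : ∀ s ∈ 𝔊, s.card = k := by
        intro s hs
        obtain ⟨a, ha, rfl⟩ := Finset.mem_image.mp hs
        rw [Finset.mem_filter] at ha
        rw [Finset.card_erase_of_mem ha.2, hcard a ha.1]; omega
      have h𝔊x : ∀ s ∈ 𝔊, x ∉ s := by
        intro s hs
        obtain ⟨a, _, rfl⟩ := Finset.mem_image.mp hs
        exact Finset.notMem_erase x a
      obtain ⟨Y', 𝒮', h𝒮'sub, h𝒮'card, h𝒮'Y, h𝒮'pw⟩ := ih 𝔊 h𝔊unif (by omega)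
      refine ⟨insert x Y', 𝒮'.image (insert x), ?_, ?_, ?_, ?_⟩
      · intro s hs
        obtain ⟨a, ha, rfl⟩ := Finset.mem_image.mp hs
        obtain ⟨b, hb, rfl⟩ := Finset.mem_image.mp (h𝒮'sub ha)
        rw [Finset.mem_filter] at hb
        rw [Finset.insert_erase hb.2]
        exact hb.1
      · rw [Finset.card_image_of_injOn, h𝒮'card]
        intro a ha b hb hab
        have hxa : x ∉ a := h𝔊x a (h𝒮'sub ha)
        have hxb : x ∉ b := h𝔊x b (h𝒮'sub hb)
        have := congrArg (Finset.erase · x) hab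
        simpa [Finset.erase_insert hxa, Finset.erase_insert hxb] using this
      · intro s hs
        obtain ⟨a, ha, rfl⟩ := Finset.mem_image.mp hs
        exact Finset.insert_subset_insert x (h𝒮'Y a ha)
      · intro s hs s' hs' hne
        obtain ⟨a, ha, rfl⟩ := Finset.mem_image.mp hs
        obtain ⟨b, hb, rfl⟩ := Finset.mem_image.mp hs'
        have hab : a ≠ b := fun h => hne (by rw [h])
        have : a ∩ b = Y' := h𝒮'pw a ha b hb hab
        ext y
        simp only [Finset.mem_inter, Finset.mem_insert]
        constructor
        · rintro ⟨hy1 | hy1, hy2 | hy2⟩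
          · exact Or.inl hy1
          · exact Or.inl hy1
          · exact Or.inl hy2
          · right; rw [← this]; exact Finset.mem_inter.mpr ⟨hy1, hy2⟩
        · rintro (rfl | hy)
          · exact ⟨Or.inl rfl, Or.inl rfl⟩
          · rw [← this] at hy
            have := Finset.mem_inter.mp hy
            exact ⟨Or.inr this.1, Or.inr this.2⟩


open Finset

variable {α : Type*} [DecidableEq α]

/-- helper: pairwise disjoint nonempty subsets of `e` number at most `e.card`. -/
lemma card_le_of_pairwise_disjoint_subsets (𝒞 : Finset (Finset α)) (e : Finset α)
    (h1 : ∀ C ∈ 𝒞, C.Nonempty) (h2 : ∀ C ∈ 𝒞, ∀ C' ∈ 𝒞, C ≠ C' → C ∩ C' = ∅)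
    (h3 : ∀ C ∈ 𝒞, C ⊆ e) : 𝒞.card ≤ e.card := by
  classical
  rcases 𝒞.eq_empty_or_nonempty with rfl | ⟨C0, hC0⟩
  · simp
  haveI : Nonempty α := ⟨(h1 C0 hC0).choose⟩
  set f : Finset α → α := fun C => if h : C.Nonempty then h.choose else Classical.arbitrary α
    with hf
  have hfmem : ∀ C ∈ 𝒞, f C ∈ C := by
    intro C hC
    simp only [hf, dif_pos (h1 C hC)]
    exact (h1 C hC).choose_spec
  apply Finset.card_le_card_of_injOn f
  · intro C hC
    exact h3 C hC (hfmem C hC)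
  · intro C hC C' hC' hfe
    by_contra hne
    have : f C ∈ C ∩ C' := Finset.mem_inter.mpr ⟨hfmem C hC, hfe ▸ hfmem C' hC'⟩
    rw [h2 C hC C' hC' hne] at this
    exact absurd this (Finset.notMem_empty _)

/-- bound for the number of pairwise disjoint nonempty centers -/
def hB (k : ℕ) : ℕ → ℕ :=
  fun ℓ => Nat.rec 0 (fun ℓ' ih => k * (k.factorial * (k + ih + ℓ' * k + ℓ' + 3) ^ k)) ℓ

theorem disjoint_centers_bounded (k : ℕ) :
    ∀ ℓ : ℕ, 1 ≤ ℓ → ∀ E : Set (Finset α),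
      (∀ e ∈ E, e.card = k) → (1 ≤ k) → ¬ IsCenter E ℓ ∅ →
      ∀ 𝒞 : Finset (Finset α), (∀ C ∈ 𝒞, C.Nonempty) →
        (∀ C ∈ 𝒞, ∀ C' ∈ 𝒞, C ≠ C' → C ∩ C' = ∅) →
        (∀ C ∈ 𝒞, IsCenter E ℓ C) → 𝒞.card ≤ hB k ℓ := by
  classical
  intro ℓ
  induction ℓ with
  | zero => omega
  | succ ℓ' ih =>
    intro _ E hunif hk hnc 𝒞 hne hpw hcen
    by_cases hl1 : ℓ' = 0
    · -- ℓ = 1 : E must be empty, so there are no centers at all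
      subst hl1
      have h𝒞e : 𝒞 = ∅ := by
        by_contra hc
        obtain ⟨C, hC⟩ := Finset.nonempty_iff_ne_empty.mpr hc
        obtain ⟨S, hSE, _, _⟩ := hcen C hC
        exact hnc ⟨fun _ => S 0, fun i => hSE 0, fun i => Finset.empty_subset _,
          fun i j hij => absurd (Fin.ext (by omega : (i : ℕ) = (j : ℕ))) hij⟩
      simp [h𝒞e]
    · have hl' : 1 ≤ ℓ' := by omega
      by_contra hbig
      push_neg at hbig
      set t : ℕ := k + hB k ℓ' + ℓ' * k + ℓ' + 4 with ht
      have hBval : hB k (ℓ' + 1) = k * (k.factorial * (t - 1) ^ k) := by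
        have : t - 1 = k + hB k ℓ' + ℓ' * k + ℓ' + 3 := by omega
        rw [this]
        rfl
      -- choose a sunflower for each center
      set F : Finset α → (Fin (ℓ' + 1) → Finset α) := fun C =>
        if h : IsCenter E (ℓ' + 1) C then h.choose else fun _ => ∅ with hF
      have hSF : ∀ C ∈ 𝒞, IsSunflower E (ℓ' + 1) C (F C) := by
        intro C hC
        simp only [hF, dif_pos (hcen C hC)]
        exact (hcen C hC).choose_spec
      set eFn : Finset α → Finset α := fun C => F C 0 with heFn
      have heE : ∀ C ∈ 𝒞, eFn C ∈ E := fun C hC => (hSF C hC).1 0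
      have heSub : ∀ C ∈ 𝒞, C ⊆ eFn C := fun C hC => (hSF C hC).2.1 0
      set img : Finset (Finset α) := 𝒞.image eFn with himg
      have himgE : ∀ s ∈ img, s ∈ E := by
        intro s hs
        obtain ⟨C, hC, rfl⟩ := Finset.mem_image.mp hs
        exact heE C hC
      have himgcard : ∀ s ∈ img, s.card = k := fun s hs => hunif s (himgE s hs)
      have hfib : 𝒞.card ≤ k * img.card := by
        apply Finset.card_le_mul_card_image
        intro e he
        have hk1 : (𝒞.filter (fun x => eFn x = e)).card ≤ e.card := by
          apply card_le_of_pairwise_disjoint_subsets _ e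
          · intro C hC
            exact hne C (Finset.mem_filter.mp hC).1
          · intro C hC C' hC' hcc
            exact hpw C (Finset.mem_filter.mp hC).1 C' (Finset.mem_filter.mp hC').1 hcc
          · intro C hC
            obtain ⟨hC1, hC2⟩ := Finset.mem_filter.mp hC
            exact hC2 ▸ heSub C hC1
        exact hk1.trans (le_of_eq (himgcard e he))
      have himgbig : k.factorial * (t - 1) ^ k < img.card := by
        rw [hBval] at hbig
        have : k * (k.factorial * (t-1)^k) < k * img.card := lt_of_lt_of_le hbig hfib
        exact Nat.lt_of_mul_lt_mul_left this
      obtain ⟨Y, 𝒮, h𝒮sub, h𝒮card, h𝒮Y, h𝒮pw⟩ :=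
        erdos_rado_sunflower t k img himgcard himgbig
      rcases Finset.eq_empty_or_nonempty Y with rfl | hYne
      · -- Y empty: ∅ is a center, contradiction
        have htl : ℓ' + 1 ≤ t := by omega
        obtain ⟨𝒮', h𝒮'sub, h𝒮'card⟩ :=
          Finset.exists_subset_card_eq (h𝒮card ▸ htl)
        have ε := Finset.equivFinOfCardEq h𝒮'card
        refine hnc ⟨fun i => ((ε.symm i : {x // x ∈ 𝒮'}) : Finset α), fun i => ?_,
          fun i => Finset.empty_subset _, fun i j hij => ?_⟩
        · exact himgE _ (h𝒮sub (h𝒮'sub (ε.symm i).2))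
        · show ((ε.symm i : {x // x ∈ 𝒮'}) : Finset α) ∩ _ = ∅
          apply h𝒮pw _ (h𝒮'sub (ε.symm i).2) _ (h𝒮'sub (ε.symm j).2)
          intro hval
          apply hij
          have h1 : ε.symm i = ε.symm j := Subtype.ext hval
          simpa using congrArg ε h1
      · -- Y nonempty
        haveI : Nonempty α := ⟨hYne.choose⟩
        have hYk : Y.card ≤ k := by
          have h𝒮ne : 𝒮.Nonempty := by
            rw [← Finset.card_pos, h𝒮card]; omega
          obtain ⟨s0, hs0⟩ := h𝒮ne
          exact (Finset.card_le_card (h𝒮Y s0 hs0)).trans (le_of_eq (himgcard s0 (h𝒮sub hs0)))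
        set Cof : Finset α → Finset α := fun s =>
          if h : ∃ C ∈ 𝒞, eFn C = s then h.choose else ∅ with hCof
        have hCofspec : ∀ s ∈ 𝒮, Cof s ∈ 𝒞 ∧ eFn (Cof s) = s := by
          intro s hs
          have hex : ∃ C ∈ 𝒞, eFn C = s := by
            obtain ⟨C, hC, hCe⟩ := Finset.mem_image.mp (h𝒮sub hs)
            exact ⟨C, hC, hCe⟩
          simp only [hCof, dif_pos hex]
          exact ⟨hex.choose_spec.1, hex.choose_spec.2⟩
        have hCofinj : ∀ s ∈ 𝒮, ∀ s' ∈ 𝒮, Cof s = Cof s' → s = s' := by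
          intro s hs s' hs' hcc
          rw [← (hCofspec s hs).2, ← (hCofspec s' hs').2, hcc]
        set 𝒮bad : Finset (Finset α) := 𝒮.filter (fun s => (Cof s ∩ Y).Nonempty) with h𝒮bad
        have hbadcard : 𝒮bad.card ≤ k := by
          refine le_trans (Finset.card_le_card_of_injOn
            (fun s => if h : (Cof s ∩ Y).Nonempty then h.choose else Classical.arbitrary α)
            ?_ ?_) hYk
          · intro s hs
            obtain ⟨hs1, hs2⟩ := Finset.mem_filter.mp hs
            simp only [dif_pos hs2]
            exact (Finset.mem_inter.mp hs2.choose_spec).2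
          · intro s hs s' hs' heq
            obtain ⟨hs1, hs2⟩ := Finset.mem_filter.mp (Finset.mem_coe.mp hs)
            obtain ⟨hs1', hs2'⟩ := Finset.mem_filter.mp (Finset.mem_coe.mp hs')
            simp only [dif_pos hs2, dif_pos hs2'] at heq
            by_contra hss
            have hCC : Cof s ≠ Cof s' := fun h => hss (hCofinj s hs1 s' hs1' h)
            have h1 : hs2.choose ∈ Cof s := (Finset.mem_inter.mp hs2.choose_spec).1
            have h2 : hs2'.choose ∈ Cof s' := (Finset.mem_inter.mp hs2'.choose_spec).1
            rw [heq] at h1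
            have : hs2'.choose ∈ Cof s ∩ Cof s' := Finset.mem_inter.mpr ⟨h1, h2⟩
            rw [hpw _ ((hCofspec s hs1).1) _ ((hCofspec s' hs1').1) hCC] at this
            exact absurd this (Finset.notMem_empty _)
        set 𝒮good : Finset (Finset α) := 𝒮 \ 𝒮bad with h𝒮good
        have hgoodcard : hB k ℓ' + 1 ≤ 𝒮good.card := by
          have : 𝒮good.card = 𝒮.card - 𝒮bad.card :=
            Finset.card_sdiff_of_subset (Finset.filter_subset _ _)
          omega
        set E' : Set (Finset α) := {e | e ∈ E ∧ e ∩ Y = ∅} with hE'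
        -- E' has no (ℓ')-sunflower with empty center
        have hnc' : ¬ IsCenter E' ℓ' ∅ := by
          rintro ⟨S', hS'E, _, hS'pw⟩
          set U : Finset α := Finset.univ.biUnion S' with hU
          have hUcard : U.card ≤ ℓ' * k := by
            calc U.card ≤ ∑ i : Fin ℓ', (S' i).card := Finset.card_biUnion_le
            _ ≤ ∑ _i : Fin ℓ', k := Finset.sum_le_sum (fun i _ => le_of_eq (hunif _ (hS'E i).1))
            _ = ℓ' * k := by simp [Finset.sum_const, mul_comm]
          set blocked : Finset (Finset α) := 𝒮.filter (fun s => ((s \ Y) ∩ U).Nonempty)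
            with hblocked
          have hblockedcard : blocked.card ≤ U.card := by
            apply Finset.card_le_card_of_injOn
              (fun s => if h : ((s \ Y) ∩ U).Nonempty then h.choose else Classical.arbitrary α)
            · intro s hs
              obtain ⟨hs1, hs2⟩ := Finset.mem_filter.mp hs
              simp only [dif_pos hs2]
              exact (Finset.mem_inter.mp hs2.choose_spec).2
            · intro s hs s' hs' heq
              obtain ⟨hs1, hs2⟩ := Finset.mem_filter.mp (Finset.mem_coe.mp hs)
              obtain ⟨hs1', hs2'⟩ := Finset.mem_filter.mp (Finset.mem_coe.mp hs')
              simp only [dif_pos hs2, dif_pos hs2'] at heq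
              by_contra hss
              have h1 := Finset.mem_inter.mp hs2.choose_spec
              have h2 := Finset.mem_inter.mp hs2'.choose_spec
              rw [heq] at h1
              have hx1 := Finset.mem_sdiff.mp h1.1
              have hx2 := Finset.mem_sdiff.mp h2.1
              have : hs2'.choose ∈ s ∩ s' := Finset.mem_inter.mpr ⟨hx1.1, hx2.1⟩
              rw [h𝒮pw s hs1 s' hs1' hss] at this
              exact hx1.2 this
          have hexs : (𝒮 \ blocked).Nonempty := by
            have hbsub : blocked ⊆ 𝒮 := by rw [hblocked]; exact Finset.filter_subset _ _
            rw [← Finset.card_pos, Finset.card_sdiff_of_subset hbsub, h𝒮card]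
            omega
          obtain ⟨s, hs⟩ := hexs
          obtain ⟨hs𝒮, hsnb⟩ := Finset.mem_sdiff.mp hs
          have hsdisj : ∀ i, S' i ∩ s = ∅ := by
            intro i
            rw [Finset.eq_empty_iff_forall_notMem]
            intro x hx
            obtain ⟨hx1, hx2⟩ := Finset.mem_inter.mp hx
            have hxY : x ∉ Y := by
              intro hxY
              have : x ∈ S' i ∩ Y := Finset.mem_inter.mpr ⟨hx1, hxY⟩
              rw [(hS'E i).2] at this
              exact absurd this (Finset.notMem_empty _)
            have hxU : x ∈ U := Finset.mem_biUnion.mpr ⟨i, Finset.mem_univ i, hx1⟩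
            apply hsnb
            rw [hblocked, Finset.mem_filter]
            exact ⟨hs𝒮, ⟨x, Finset.mem_inter.mpr ⟨Finset.mem_sdiff.mpr ⟨hx2, hxY⟩, hxU⟩⟩⟩
          apply hnc
          refine ⟨Fin.snoc S' s, ?_, fun i => Finset.empty_subset _, ?_⟩
          · intro i
            refine Fin.lastCases ?_ ?_ i
            · rw [Fin.snoc_last]
              exact himgE s (h𝒮sub hs𝒮)
            · intro j
              rw [Fin.snoc_castSucc]
              exact (hS'E j).1
          · intro i j hij
            rcases Fin.eq_castSucc_or_eq_last i with ⟨i', rfl⟩ | rfl <;>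
              rcases Fin.eq_castSucc_or_eq_last j with ⟨j', rfl⟩ | rfl
            · simp only [Fin.snoc_castSucc]
              apply hS'pw
              intro h
              exact hij (by rw [h])
            · simp only [Fin.snoc_castSucc, Fin.snoc_last]
              exact hsdisj i'
            · simp only [Fin.snoc_castSucc, Fin.snoc_last]
              rw [Finset.inter_comm]
              exact hsdisj j'
            · exact absurd rfl hij
        -- good centers are (ℓ')-centers of E'
        have hgoodcen : ∀ s ∈ 𝒮good, IsCenter E' ℓ' (Cof s) := by
          intro s hsg
          obtain ⟨hs𝒮, hsnb⟩ := Finset.mem_sdiff.mp hsg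
          have hCY : Cof s ∩ Y = ∅ := by
            by_contra h
            exact hsnb (Finset.mem_filter.mpr ⟨hs𝒮, Finset.nonempty_iff_ne_empty.mpr h⟩)
          obtain ⟨hC𝒞, hCe⟩ := hCofspec s hs𝒮
          obtain ⟨hSE, hSC, hSpw⟩ := hSF _ hC𝒞
          refine ⟨fun r => F (Cof s) r.succ, fun r => ⟨hSE r.succ, ?_⟩,
            fun r => hSC r.succ, fun r r' hrr => hSpw r.succ r'.succ (by
              simpa [Fin.succ_inj] using hrr)⟩
          rw [Finset.eq_empty_iff_forall_notMem]
          intro x hx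
          obtain ⟨hx1, hx2⟩ := Finset.mem_inter.mp hx
          have hxs : x ∈ F (Cof s) 0 := by
            have : Y ⊆ s := h𝒮Y s hs𝒮
            have hxs' : x ∈ s := this hx2
            rw [← hCe] at hxs'
            exact hxs'
          have : x ∈ F (Cof s) r.succ ∩ F (Cof s) 0 := Finset.mem_inter.mpr ⟨hx1, hxs⟩
          rw [hSpw r.succ 0 (Fin.succ_ne_zero r)] at this
          have : x ∈ Cof s ∩ Y := Finset.mem_inter.mpr ⟨this, hx2⟩
          rw [hCY] at this
          exact absurd this (Finset.notMem_empty _)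
        -- contradiction with the inductive hypothesis
        set 𝒞' : Finset (Finset α) := 𝒮good.image Cof with h𝒞'
        have h𝒞'card : 𝒞'.card = 𝒮good.card := by
          apply Finset.card_image_of_injOn
          intro s hs s' hs' hcc
          exact hCofinj s (Finset.mem_sdiff.mp hs).1 s' (Finset.mem_sdiff.mp hs').1 hcc
        have hmem𝒞 : ∀ C ∈ 𝒞', C ∈ 𝒞 := by
          intro C hC
          obtain ⟨s, hs, rfl⟩ := Finset.mem_image.mp hC
          exact (hCofspec s (Finset.mem_sdiff.mp hs).1).1
        have := ih hl' E' (fun e he => hunif e he.1) hk hnc' 𝒞'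
          (fun C hC => hne C (hmem𝒞 C hC))
          (fun C hC C' hC' hcc => hpw C (hmem𝒞 C hC) C' (hmem𝒞 C' hC') hcc)
          (by
            intro C hC
            obtain ⟨s, hs, rfl⟩ := Finset.mem_image.mp hC
            exact hgoodcen s hs)
        omega


def linkE (E : Set (Finset α)) (v : α) : Set (Finset α) :=
  {s | ∃ e ∈ E, v ∈ e ∧ s = e.erase v}

lemma erase_inter_distrib (s t : Finset α) (v : α) :
    (s ∩ t).erase v = s.erase v ∩ t.erase v := by
  ext x
  simp only [Finset.mem_erase, Finset.mem_inter]
  tauto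

lemma insert_inter_distrib' (s t : Finset α) (v : α) :
    insert v s ∩ insert v t = insert v (s ∩ t) := by
  ext x
  simp only [Finset.mem_insert, Finset.mem_inter]
  tauto

lemma minCenter_link {E : Set (Finset α)} {ℓ : ℕ} {v : α} {C : Finset α}
    (hv : v ∈ C) (h : IsMinCenter E ℓ C) : IsMinCenter (linkE E v) ℓ (C.erase v) := by
  constructor
  · obtain ⟨S, hSE, hSC, hSpw⟩ := h.1
    refine ⟨fun i => (S i).erase v, fun i => ⟨S i, hSE i, hSC i hv, rfl⟩,
      fun i => Finset.erase_subset_erase v (hSC i), fun i j hij => ?_⟩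
    rw [← erase_inter_distrib, hSpw i j hij]
  · intro D hD ⟨S', hS'E, hS'C, hS'pw⟩
    have hchoice : ∀ i, ∃ e, e ∈ E ∧ v ∈ e ∧ S' i = e.erase v := by
      intro i
      obtain ⟨e, he, hve, hse⟩ := hS'E i
      exact ⟨e, he, hve, hse⟩
    choose e heE hve hse using hchoice
    have hvD : v ∉ D := fun hvd => Finset.notMem_erase v C (hD.1 hvd)
    have hins : ∀ i, e i = insert v (S' i) := by
      intro i
      rw [hse i, Finset.insert_erase (hve i)]
    have hC' : IsCenter E ℓ (insert v D) := by
      refine ⟨e, heE, fun i => ?_, fun i j hij => ?_⟩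
      · rw [hins i]
        exact Finset.insert_subset_insert v (hS'C i)
      · rw [hins i, hins j, insert_inter_distrib', hS'pw i j hij]
    apply h.2 (insert v D) ?_ hC'
    constructor
    · intro x hx
      rcases Finset.mem_insert.mp hx with rfl | hx
      · exact hv
      · exact Finset.erase_subset v C (hD.1 hx)
    · intro hsub
      have h1 : C.erase v ⊆ D := by
        intro x hx
        have hxC := hsub (Finset.erase_subset v C hx)
        rcases Finset.mem_insert.mp hxC with rfl | hxD
        · exact absurd hx (Finset.notMem_erase x C)
        · exact hxD
      exact hD.2 h1

lemma linkE_uniform {E : Set (Finset α)} {k : ℕ} (hunif : ∀ e ∈ E, e.card = k + 1) (v : α) :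
    ∀ s ∈ linkE E v, s.card = k := by
  rintro s ⟨e, he, hve, rfl⟩
  rw [Finset.card_erase_of_mem hve, hunif e he]; omega

/-- the final bound -/
def GB : ℕ → ℕ → ℕ
  | 0, _ => 1
  | (k+1), ℓ => 1 + (k + 1) * hB (k + 1) ℓ * GB k ℓ

lemma GB_pos (k ℓ : ℕ) : 1 ≤ GB k ℓ := by
  cases k <;> simp [GB]

theorem minCenters_bounded : ∀ (k : ℕ) {α : Type*} [DecidableEq α] (E : Set (Finset α)),
    (∀ e ∈ E, e.card = k) → ∀ ℓ : ℕ, 1 ≤ ℓ →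
    ∀ Fs : Finset (Finset α), (∀ C ∈ Fs, IsMinCenter E ℓ C) → Fs.card ≤ GB k ℓ := by
  classical
  intro k
  induction k with
  | zero =>
    intro α _ E hunif ℓ hl Fs hFs
    have : Fs ⊆ {∅} := by
      intro C hC
      obtain ⟨S, hSE, hSC, _⟩ := (hFs C hC).1
      have h0 : S ⟨0, hl⟩ = ∅ := Finset.card_eq_zero.mp (hunif _ (hSE ⟨0, hl⟩))
      have : C = ∅ := Finset.subset_empty.mp (h0 ▸ hSC ⟨0, hl⟩)
      simp [this]
    calc Fs.card ≤ 1 := by simpa using Finset.card_le_card this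
    _ ≤ GB 0 ℓ := GB_pos 0 ℓ
  | succ k ih =>
    intro α _ E hunif ℓ hl Fs hFs
    by_cases hcEmpty : IsCenter E ℓ ∅
    · have : Fs ⊆ {∅} := by
        intro C hC
        rw [Finset.mem_singleton]
        by_contra hcne
        exact (hFs C hC).2 ∅ (Finset.ssubset_iff_subset_ne.mpr
          ⟨Finset.empty_subset C, fun h => hcne h.symm⟩) hcEmpty
      calc Fs.card ≤ 1 := by simpa using Finset.card_le_card this
      _ ≤ GB (k+1) ℓ := GB_pos _ ℓ
    · -- every minimal center is nonempty
      have hne : ∀ C ∈ Fs, C.Nonempty := by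
        intro C hC
        rw [Finset.nonempty_iff_ne_empty]
        intro hCe
        apply hcEmpty
        have hx := (hFs C hC).1
        rwa [hCe] at hx
      have hcen : ∀ C ∈ Fs, IsCenter E ℓ C := fun C hC => (hFs C hC).1
      have hpwFs : ∀ 𝒟 : Finset (Finset α), 𝒟 ⊆ Fs →
          (∀ C ∈ 𝒟, ∀ C' ∈ 𝒟, C ≠ C' → C ∩ C' = ∅) → 𝒟.card ≤ hB (k+1) ℓ := by
        intro 𝒟 hsub hpw
        exact disjoint_centers_bounded (k+1) ℓ hl E hunif (by omega) hcEmpty 𝒟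
          (fun C hC => hne C (hsub hC)) hpw (fun C hC => hcen C (hsub hC))
      -- maximal pairwise disjoint subfamily of Fs
      set P : Finset (Finset α) → Prop :=
        fun D => D ⊆ Fs ∧ ∀ s ∈ D, ∀ s' ∈ D, s ≠ s' → s ∩ s' = ∅ with hP
      have hPne : (Fs.powerset.filter P).Nonempty := ⟨∅, by simp [hP]⟩
      obtain ⟨𝒟, h𝒟mem, h𝒟max⟩ := Finset.exists_max_image _ Finset.card hPne
      rw [Finset.mem_filter, Finset.mem_powerset] at h𝒟mem
      obtain ⟨h𝒟sub, h𝒟P⟩ := h𝒟mem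
      simp only [hP] at h𝒟P
      obtain ⟨h𝒟sub', h𝒟pw⟩ := h𝒟P
      have h𝒟card : 𝒟.card ≤ hB (k+1) ℓ := hpwFs 𝒟 h𝒟sub' h𝒟pw
      set T : Finset α := 𝒟.biUnion id with hT
      have hTcard : T.card ≤ hB (k+1) ℓ * (k+1) := by
        calc T.card ≤ ∑ C ∈ 𝒟, C.card := Finset.card_biUnion_le
        _ ≤ ∑ _C ∈ 𝒟, (k+1) := by
            apply Finset.sum_le_sum
            intro C hC
            obtain ⟨S, hSE, hSC, _⟩ := hcen C (h𝒟sub' hC)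
            calc C.card ≤ (S ⟨0, hl⟩).card := Finset.card_le_card (hSC ⟨0, hl⟩)
            _ = k + 1 := hunif _ (hSE ⟨0, hl⟩)
        _ = 𝒟.card * (k+1) := by rw [Finset.sum_const, smul_eq_mul]
        _ ≤ hB (k+1) ℓ * (k+1) := Nat.mul_le_mul_right _ h𝒟card
      have hmeetT : ∀ C ∈ Fs, (C ∩ T).Nonempty := by
        intro C hC
        rcases Finset.eq_empty_or_nonempty (C ∩ T) with he | hne'
        · exfalso
          have hCnotin : C ∉ 𝒟 := by
            intro hCin
            have hsubT : C ⊆ T := fun x hx => Finset.mem_biUnion.mpr ⟨C, hCin, hx⟩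
            have : C ∩ T = C := Finset.inter_eq_left.mpr hsubT
            rw [he] at this
            exact absurd this.symm (Finset.nonempty_iff_ne_empty.mp (hne C hC))
          have key : ∀ c ∈ 𝒟, C ∩ c = ∅ := by
            intro c hc
            have hcT : c ⊆ T := fun y hy => Finset.mem_biUnion.mpr ⟨c, hc, hy⟩
            have h1 : C ∩ c ⊆ C ∩ T := Finset.inter_subset_inter (Finset.Subset.refl C) hcT
            rw [he] at h1
            exact Finset.subset_empty.mp h1
          have hnew : P (insert C 𝒟) := by
            constructor
            · exact Finset.insert_subset hC h𝒟sub'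
            · intro a ha b hb hab
              by_cases ha' : a ∈ 𝒟
              · by_cases hb' : b ∈ 𝒟
                · exact h𝒟pw a ha' b hb' hab
                · have : b = C := by
                    rcases Finset.mem_insert.mp hb with h | h
                    · exact h
                    · exact absurd h hb'
                  subst this
                  rw [Finset.inter_comm]
                  exact key a ha'
              · have : a = C := by
                  rcases Finset.mem_insert.mp ha with h | h
                  · exact h
                  · exact absurd h ha'
                subst this
                have hb' : b ∈ 𝒟 := by
                  rcases Finset.mem_insert.mp hb with h | h
                  · exact absurd h hab.symm
                  · exact h
                exact key b hb'
          have hmem' : insert C 𝒟 ∈ Fs.powerset.filter P := by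
            rw [Finset.mem_filter, Finset.mem_powerset]
            exact ⟨Finset.insert_subset hC h𝒟sub', hnew⟩
          have := h𝒟max _ hmem'
          rw [Finset.card_insert_of_notMem hCnotin] at this
          omega
        · exact hne'
      -- decompose by vertices of T and use the induction hypothesis on links
      have hsubB : Fs ⊆ T.biUnion (fun v => Fs.filter (v ∈ ·)) := by
        intro C hC
        obtain ⟨x, hx⟩ := hmeetT C hC
        rw [Finset.mem_inter] at hx
        exact Finset.mem_biUnion.mpr ⟨x, hx.2, Finset.mem_filter.mpr ⟨hC, hx.1⟩⟩
      have hlink : ∀ v, (Fs.filter (v ∈ ·)).card ≤ GB k ℓ := by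
        intro v
        set img := (Fs.filter (v ∈ ·)).image (Finset.erase · v) with himg
        have hinj : Set.InjOn (Finset.erase · v) (Fs.filter (v ∈ ·)) := by
          intro a ha b hb hab
          simp only [Finset.coe_filter, Set.mem_setOf_eq] at ha hb
          have := congrArg (insert v) hab
          rwa [Finset.insert_erase ha.2, Finset.insert_erase hb.2] at this
        have hcardeq : img.card = (Fs.filter (v ∈ ·)).card := Finset.card_image_of_injOn hinj
        rw [← hcardeq]
        apply ih (linkE E v) (linkE_uniform hunif v) ℓ hl
        intro D hD
        obtain ⟨a, ha, rfl⟩ := Finset.mem_image.mp hD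
        obtain ⟨ha1, ha2⟩ := Finset.mem_filter.mp ha
        exact minCenter_link ha2 (hFs a ha1)
      calc Fs.card ≤ (T.biUnion (fun v => Fs.filter (v ∈ ·))).card := Finset.card_le_card hsubB
      _ ≤ ∑ v ∈ T, (Fs.filter (v ∈ ·)).card := Finset.card_biUnion_le
      _ ≤ ∑ _v ∈ T, GB k ℓ := Finset.sum_le_sum (fun v _ => hlink v)
      _ = T.card * GB k ℓ := by rw [Finset.sum_const, smul_eq_mul]
      _ ≤ hB (k+1) ℓ * (k+1) * GB k ℓ := Nat.mul_le_mul_right _ hTcard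
      _ ≤ GB (k+1) ℓ := by
          show _ ≤ 1 + (k + 1) * hB (k + 1) ℓ * GB k ℓ
          rw [mul_comm (hB (k+1) ℓ) (k+1)]
          omega


/-- For every `k ≥ 1` there is a function `mc` such that every `k`-uniform hypergraph has,
for every `ℓ ≥ 1`, at most `mc ℓ` distinct centers of minimal `ℓ`-sunflowers. -/
theorem min_sunflower_centers_bounded (k : ℕ) (hk : 1 ≤ k) :
    ∃ mc : ℕ → ℕ, ∀ (α : Type u) [DecidableEq α] (V : Finset α) (E : Set (Finset α)),
      (∀ e ∈ E, e ⊆ V) → (∀ e ∈ E, e.card = k) → ∀ ℓ : ℕ, 1 ≤ ℓ →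
        {C : Finset α | IsMinCenter E ℓ C}.Finite ∧
          {C : Finset α | IsMinCenter E ℓ C}.ncard ≤ mc ℓ := by
  
  classical
  refine ⟨GB k, ?_⟩
  intro α _ V E hV hunif ℓ hl
  have hsub : {C : Finset α | IsMinCenter E ℓ C} ⊆ ↑V.powerset := by
    intro C hC
    obtain ⟨S, hSE, hSC, _⟩ := hC.1
    rw [Finset.mem_coe, Finset.mem_powerset]
    exact (hSC ⟨0, hl⟩).trans (hV _ (hSE ⟨0, hl⟩))
  have hfin := Set.Finite.subset (V.powerset).finite_toSet hsub
  refine ⟨hfin, ?_⟩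
  rw [Set.ncard_eq_toFinset_card _ hfin]
  exact minCenters_bounded k E hunif ℓ hl hfin.toFinset
    (fun C hC => (Set.Finite.mem_toFinset hfin).mp hC)
end

section
/- For every integer k ≥ 1 there exists a function f_k : ℕ → ℕ such that every k-uniform hypergraph H = (V, E) has, for every integer ℓ ≥ 1, an ℓ-kernel K ⊆ V with |K| ≤ f_k(ℓ). -/
section Defs

variable {α : Type*} [DecidableEq α]

/-- The `ℓ`-sunflower `S` with center `C` is outside `Y`: all its petals `S i \ C` are
disjoint from `Y`. -/
def IsSunflowerOutside (E : Set (Finset α)) (ℓ : ℕ) (Y C : Finset α)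
    (S : Fin ℓ → Finset α) : Prop :=
  IsSunflower E ℓ C S ∧ ∀ i, Disjoint (S i \ C) Y

/-- `C` is the center of some `ℓ`-sunflower of `E` outside `Y`. -/
def IsCenterOutside (E : Set (Finset α)) (ℓ : ℕ) (Y C : Finset α) : Prop :=
  ∃ S, IsSunflowerOutside E ℓ Y C S

/-- `K` is an `ℓ`-kernel of the hypergraph `(V, E)`: `K ⊆ V` and every edge `e ∈ E` contains a
set `C ⊆ e ∩ K` which is the center of an `ℓ`-sunflower of `E` outside `K`. -/
def IsKernel (V : Finset α) (E : Set (Finset α)) (ℓ : ℕ) (K : Finset α) : Prop :=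
  K ⊆ V ∧ ∀ e ∈ E, ∃ C, C ⊆ e ∩ K ∧ IsCenterOutside E ℓ K C

end Defs

/-!
Induction on the edge size `k`, for finite families of hypergraphs that share one kernel.
A hypergraph with a matching of size `ℓ + |K|` is served by `K` with empty centers: at most `|K|`
of the matching edges meet `K`. Otherwise the union `U` of a maximum matching meets every nonempty
edge, an edge `e` is handled through the link of its trace `e ∩ U`, whose edges are smaller, and a
common kernel `K'` of all these links yields the kernel `U ∪ K'`.
Families are what make the bound uniform: by pigeonhole there is one of `N + 1` thresholds
`B i < B (i + 1)` that no member of an `N`-element family straddles, and the thresholds grow fast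
enough that the kernel built for the members without a matching of size `B i` is too small to
spoil the members with a matching of size `B (i + 1)`.
-/

open Finset

theorem Nat.exists_le_succ_eq_of_antitone {f : ℕ → ℕ} (hf : Antitone f) :
    ∃ i ≤ f 0, f (i + 1) = f i := by
  by_contra! h
  have hdrop : ∀ i ≤ f 0 + 1, f i + i ≤ f 0 := by
    intro i
    induction i with
    | zero => simp
    | succ i ih =>
      intro hi
      have := lt_of_le_of_ne (hf (Nat.le_add_right i 1)) (h i (by omega))
      have := ih (by omega)
      omega
  have := hdrop (f 0 + 1) le_rfl
  omega

theorem Finset.exists_le_card_forall_imp_succ {β : Type*} (s : Finset β) (P : ℕ → β → Prop)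
    (hP : ∀ i x, P (i + 1) x → P i x) : ∃ i ≤ s.card, ∀ x ∈ s, P i x → P (i + 1) x := by
  classical
  have hsub : ∀ i, s.filter (P (i + 1)) ⊆ s.filter (P i) :=
    fun i => monotone_filter_right s fun x _ => hP i x
  obtain ⟨i, hi, heq⟩ := Nat.exists_le_succ_eq_of_antitone (f := fun i => (s.filter (P i)).card)
    (antitone_nat_of_succ_le fun i => card_le_card (hsub i))
  refine ⟨i, hi.trans (card_filter_le _ _), fun x hx hPx => ?_⟩
  have := eq_of_subset_of_card_le (hsub i) heq.ge
  exact (mem_filter.mp (this ▸ mem_filter.mpr ⟨hx, hPx⟩)).2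

section Kernels

variable {α : Type*}

def HasMatching (E : Set (Finset α)) (m : ℕ) : Prop :=
  ∃ M : Finset (Finset α), m ≤ M.card ∧ ↑M ⊆ E ∧ (M : Set (Finset α)).PairwiseDisjoint id

theorem HasMatching.mono {E : Set (Finset α)} {m n : ℕ} (h : HasMatching E n) (hmn : m ≤ n) :
    HasMatching E m :=
  let ⟨M, hM, hME, hMd⟩ := h
  ⟨M, hmn.trans hM, hME, hMd⟩

variable [DecidableEq α]

def IsCenterCover (E : Set (Finset α)) (ℓ : ℕ) (K : Finset α) : Prop :=
  ∀ e ∈ E, ∃ C, C ⊆ e ∩ K ∧ IsCenterOutside E ℓ K C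

def link (E : Set (Finset α)) (U T : Finset α) : Set (Finset α) :=
  {p | Disjoint p U ∧ T ∪ p ∈ E}

variable {E : Set (Finset α)} {ℓ : ℕ}

theorem isCenterOutside_of_mem {K e : Finset α} (he : e ∈ E) : IsCenterOutside E ℓ K e :=
  ⟨fun _ => e, ⟨fun _ => he, fun _ => subset_rfl, fun _ _ _ => inter_self e⟩,
    fun _ => by simp⟩

theorem IsCenterCover.isKernel {V K : Finset α} (h : IsCenterCover E ℓ K)
    (hEV : ∀ e ∈ E, e ⊆ V) : IsKernel V E ℓ (K ∩ V) := by
  refine ⟨inter_subset_right, fun e he => ?_⟩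
  obtain ⟨C, hCe, S, hS, hSK⟩ := h e he
  refine ⟨C, fun x hx => ?_, S, hS, fun i => (hSK i).mono_right inter_subset_left⟩
  have := mem_inter.mp (hCe hx)
  exact mem_inter.mpr ⟨this.1, mem_inter.mpr ⟨this.2, hEV e he this.1⟩⟩

theorem isCenterOutside_empty_of_pairwiseDisjoint {K : Finset α} {M : Finset (Finset α)}
    (hME : ↑M ⊆ E) (hM : ℓ ≤ M.card) (hMd : (M : Set (Finset α)).PairwiseDisjoint id)
    (hMK : ∀ s ∈ M, Disjoint s K) : IsCenterOutside E ℓ K ∅ := by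
  obtain ⟨M', hM'M, rfl⟩ := exists_subset_card_eq hM
  let S : Fin M'.card → Finset α := fun i => M'.equivFin.symm i
  have hSM (i) : S i ∈ M := hM'M (M'.equivFin.symm i).2
  refine ⟨S, ⟨fun i => hME (hSM i), fun _ => empty_subset _, fun i j hij => ?_⟩,
    fun i => by simpa using hMK _ (hSM i)⟩
  refine disjoint_iff_inter_eq_empty.mp (hMd (hSM i) (hSM j) fun h => hij ?_)
  exact M'.equivFin.symm.injective (Subtype.ext h)

theorem isCenterCover_of_hasMatching {K : Finset α} (h : HasMatching E (ℓ + K.card)) :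
    IsCenterCover E ℓ K := by
  classical
  obtain ⟨M, hM, hME, hMd⟩ := h
  have hbad : (M.filter fun s => ¬ Disjoint s K).card ≤ K.card := by
    refine card_le_card_of_forall_subsingleton (fun s v => v ∈ s) (fun s hs => ?_) ?_
    · obtain ⟨v, hvs, hvK⟩ := not_disjoint_iff.mp (mem_filter.mp hs).2
      exact ⟨v, hvK, hvs⟩
    · intro v _ s hs t ht
      by_contra hst
      exact disjoint_left.mp (hMd (mem_filter.mp hs.1).1 (mem_filter.mp ht.1).1 hst) hs.2 ht.2
  have hgood : ℓ ≤ (M.filter fun s => Disjoint s K).card := by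
    have := card_filter_add_card_filter_not (s := M) (fun s => Disjoint s K)
    omega
  intro e _
  refine ⟨∅, empty_subset _, isCenterOutside_empty_of_pairwiseDisjoint
    (fun s hs => hME (mem_filter.mp hs).1) hgood (hMd.subset fun s hs => (mem_filter.mp hs).1)
    fun s hs => (mem_filter.mp hs).2⟩

theorem exists_transversal_of_not_hasMatching {k m : ℕ} (hE : ∀ e ∈ E, e.card ≤ k)
    (h : ¬ HasMatching E m) : ∃ U : Finset α, U.card ≤ k * m ∧ ∀ e ∈ E, Disjoint e U → e = ∅ := by
  classical
  obtain ⟨M, hnM, hME, hMd⟩ : HasMatching E (Nat.findGreatest (HasMatching E) m) :=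
    Nat.findGreatest_spec (Nat.zero_le m) ⟨∅, le_rfl, by simp, by simp⟩
  have hMm : M.card < m := lt_of_not_ge fun hm => h ⟨M, hm, hME, hMd⟩
  refine ⟨M.biUnion id, ?_, fun e he hdisj => ?_⟩
  · calc (M.biUnion id).card ≤ M.card * k :=
          card_biUnion_le_card_mul _ _ _ fun s hs => hE s (hME hs)
      _ ≤ k * m := by rw [mul_comm]; gcongr
  · -- A nonempty edge missing the union of a maximum matching would extend the matching.
    by_contra hne
    have heM : e ∉ M := fun heM =>
      hne ((disjoint_self_iff_empty e).mp (hdisj.mono_right (subset_biUnion_of_mem id heM)))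
    refine Nat.findGreatest_is_greatest (Nat.lt_succ_of_le hnM) (by omega) ⟨insert e M, ?_, ?_, ?_⟩
    · rw [card_insert_of_notMem heM]
    · rw [coe_insert]; exact Set.insert_subset he hME
    · rw [coe_insert]; exact hMd.insert fun t ht _ => (disjoint_biUnion_right _ _ _).mp hdisj t ht

theorem exists_common_transversal {k m : ℕ} (F : Finset (Set (Finset α)))
    (hF : ∀ E ∈ F, (∀ e ∈ E, e.card ≤ k) ∧ ¬ HasMatching E m) :
    ∃ U : Finset α, U.card ≤ F.card * (k * m) ∧ ∀ E ∈ F, ∀ e ∈ E, Disjoint e U → e = ∅ := by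
  choose! U hUcard hU using fun E hE =>
    exists_transversal_of_not_hasMatching (hF E hE).1 (hF E hE).2
  refine ⟨F.biUnion U, card_biUnion_le_card_mul _ _ _ hUcard, fun E hE e he hdisj => ?_⟩
  exact hU E hE e he (hdisj.mono_right (subset_biUnion_of_mem U hE))

theorem card_le_of_mem_link {k : ℕ} {U T p : Finset α} (hE : ∀ e ∈ E, e.card ≤ k + 1)
    (hU : ∀ e ∈ E, Disjoint e U → e = ∅) (hT : T ⊆ U) (hp : p ∈ link E U T) : p.card ≤ k := by
  obtain ⟨hpU, hTp⟩ := hp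
  rcases T.eq_empty_or_nonempty with rfl | hTne
  · rw [empty_union] at hTp
    simp [hU p hTp hpU]
  · have := card_union_of_disjoint (hpU.symm.mono_left hT)
    have := hE _ hTp
    have := hTne.card_pos
    omega

theorem IsCenterOutside.union_link {U T K' C' : Finset α}
    (h : IsCenterOutside (link E U T) ℓ K' C') : IsCenterOutside E ℓ (U ∪ K') (T ∪ C') := by
  obtain ⟨S, ⟨hSE, hCS, hSS⟩, hSK⟩ := h
  refine ⟨fun i => T ∪ S i, ⟨fun i => (hSE i).2, fun i => union_subset_union_right (hCS i),
    fun i j hij => by rw [← union_inter_distrib_left, hSS i j hij]⟩, fun i => ?_⟩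
  have hsub : (T ∪ S i) \ (T ∪ C') ⊆ S i \ C' := by
    intro x
    simp only [mem_sdiff, mem_union]
    tauto
  exact (disjoint_union_right.mpr ⟨(hSE i).1.mono_left sdiff_subset, hSK i⟩).mono_left hsub

theorem isCenterCover_union_of_link {U K' : Finset α}
    (h : ∀ T ⊆ U, IsCenterCover (link E U T) ℓ K') : IsCenterCover E ℓ (U ∪ K') := by
  intro e he
  have hp : e \ U ∈ link E U (e ∩ U) := ⟨sdiff_disjoint, by rwa [union_comm, sdiff_union_inter]⟩
  obtain ⟨C', hC', hcenter⟩ := h _ inter_subset_right _ hp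
  refine ⟨e ∩ U ∪ C', union_subset (inter_subset_inter_left subset_union_left) ?_,
    hcenter.union_link⟩
  exact hC'.trans (inter_subset_inter sdiff_subset subset_union_right)

theorem exists_isCenterCover_of_not_hasMatching {k N B : ℕ} {g : ℕ → ℕ}
    (hg : ∀ M (F : Finset (Set (Finset α))), F.card ≤ M → (∀ E ∈ F, ∀ e ∈ E, e.card ≤ k) →
      ∃ K : Finset α, K.card ≤ g M ∧ ∀ E ∈ F, IsCenterCover E ℓ K)
    (F : Finset (Set (Finset α))) (hFN : F.card ≤ N) (hF : ∀ E ∈ F, ∀ e ∈ E, e.card ≤ k + 1) :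
    ∃ K : Finset α, K.card ≤ N * ((k + 1) * B) + g (N * 2 ^ (N * ((k + 1) * B))) ∧
      ∀ E ∈ F, ¬ HasMatching E B → IsCenterCover E ℓ K := by
  classical
  set small := F.filter fun E => ¬ HasMatching E B
  have hsmallN : small.card ≤ N := (card_filter_le _ _).trans hFN
  obtain ⟨U, hUcard, hU⟩ := exists_common_transversal small fun E hE =>
    ⟨hF E (mem_filter.mp hE).1, (mem_filter.mp hE).2⟩
  replace hUcard : U.card ≤ N * ((k + 1) * B) := hUcard.trans (by gcongr)
  set links := (small ×ˢ U.powerset).image fun ET => link ET.1 U ET.2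
  have hlinks : links.card ≤ N * 2 ^ (N * ((k + 1) * B)) := by
    refine card_image_le.trans ?_
    rw [card_product, card_powerset]
    gcongr
    norm_num
  have hlinks_card : ∀ E' ∈ links, ∀ p ∈ E', p.card ≤ k := by
    simp only [links, mem_image, mem_product, mem_powerset]
    rintro _ ⟨⟨E, T⟩, ⟨hE, hT⟩, rfl⟩ p hp
    exact card_le_of_mem_link (hF E (mem_filter.mp hE).1) (hU E hE) hT hp
  obtain ⟨K', hK'card, hK'⟩ := hg _ links hlinks hlinks_card
  refine ⟨U ∪ K', (card_union_le _ _).trans (add_le_add hUcard hK'card), fun E hE hsmall => ?_⟩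
  refine isCenterCover_union_of_link fun T hT => hK' _ ?_
  exact mem_image_of_mem (fun ET => link ET.1 U ET.2) (s := small ×ˢ U.powerset) (a := (E, T))
    (mem_product.mpr ⟨mem_filter.mpr ⟨hE, hsmall⟩, mem_powerset.mpr hT⟩)

end Kernels

theorem exists_common_isCenterCover (ℓ k N : ℕ) :
    ∃ b : ℕ, ∀ {α : Type*} [DecidableEq α] (F : Finset (Set (Finset α))), F.card ≤ N →
      (∀ E ∈ F, ∀ e ∈ E, e.card ≤ k) →
        ∃ K : Finset α, K.card ≤ b ∧ ∀ E ∈ F, IsCenterCover E ℓ K := by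
  induction k generalizing N with
  | zero =>
    refine ⟨0, fun F _ hF => ⟨∅, le_rfl, fun E hE e he => ⟨e, ?_, isCenterOutside_of_mem he⟩⟩⟩
    simp [card_eq_zero.mp (Nat.le_zero.mp (hF E hE e he))]
  | succ k ih =>
    choose g hg using ih
    set h : ℕ → ℕ := fun B => N * ((k + 1) * B) + g (N * 2 ^ (N * ((k + 1) * B)))
    set B : ℕ → ℕ := fun i => (fun b => b + ℓ + h b)^[i] 0
    have hB_succ (i : ℕ) : B (i + 1) = B i + ℓ + h (B i) :=
      Function.iterate_succ_apply' _ i 0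
    have hB_mono : Monotone B := fun i j hij =>
      Function.monotone_iterate_of_id_le (fun b => by dsimp; omega) hij 0
    refine ⟨B (N + 1), fun F hFN hF => ?_⟩
    obtain ⟨i, hiN, hstable⟩ := F.exists_le_card_forall_imp_succ (fun i E => HasMatching E (B i))
      fun i E hE => hE.mono (hB_mono i.le_succ)
    obtain ⟨K, hKcard, hK⟩ :=
      exists_isCenterCover_of_not_hasMatching (B := B i) (hg · ·) F hFN hF
    replace hKcard : K.card ≤ h (B i) := hKcard
    have hKB : ℓ + K.card ≤ B (i + 1) := by rw [hB_succ]; omega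
    refine ⟨K, (by omega : K.card ≤ B (i + 1)).trans (hB_mono (by omega)), fun E hE => ?_⟩
    by_cases hmatch : HasMatching E (B i)
    · exact isCenterCover_of_hasMatching ((hstable E hE hmatch).mono hKB)
    · exact hK E hE hmatch

theorem kernel_exists_general (k : ℕ) :
    ∃ f : ℕ → ℕ, ∀ (α : Type u) [DecidableEq α] (V : Finset α) (E : Set (Finset α)),
      (∀ e ∈ E, e ⊆ V) → (∀ e ∈ E, e.card = k) → ∀ ℓ : ℕ, 1 ≤ ℓ →
        ∃ K : Finset α, IsKernel V E ℓ K ∧ K.card ≤ f ℓ := by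
  choose f hf using fun ℓ => exists_common_isCenterCover ℓ k 1
  refine ⟨f, fun α _ V E hEV hEk ℓ _ => ?_⟩
  obtain ⟨K, hKcard, hK⟩ := hf ℓ {E} (card_singleton E).le fun E' hE' e he => by
    rw [mem_singleton.mp hE'] at he
    exact (hEk e he).le
  exact ⟨K ∩ V, (hK E (mem_singleton_self E)).isKernel hEV,
    (card_le_card inter_subset_left).trans hKcard⟩

/-- For every `k ≥ 1` there is a function `f` such that every `k`-uniform hypergraph
`H = (V, E)` has, for every `ℓ ≥ 1`, an `ℓ`-kernel of size at most `f ℓ`. -/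
theorem kernel_exists (k : ℕ) (hk : 1 ≤ k) :
    ∃ f : ℕ → ℕ, ∀ (α : Type u) [DecidableEq α] (V : Finset α) (E : Set (Finset α)),
      (∀ e ∈ E, e ⊆ V) → (∀ e ∈ E, e.card = k) → ∀ ℓ : ℕ, 1 ≤ ℓ →
        ∃ K : Finset α, IsKernel V E ℓ K ∧ K.card ≤ f ℓ :=
  kernel_exists_general k
end

section
/- Let H = (V, E) be a k-uniform hypergraph and let K ⊆ V be a 2^k-kernel of H. Then Waiter has a winning strategy in the Waiter-Client game on H if and only if Waiter has a winning strategy in the Waiter-Client game on the trace hypergraph T_K(H) = (K, {e ∩ K : e ∈ E}). -/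
/-!
A win on `H` gives a win on the trace: Waiter follows her strategy for `H`, offering the pairs
inside `K` and pretending to have received a vertex outside `K` whenever she would offer one.

A win on the trace gives a win on `H`: Waiter plays her trace strategy and never touches
`V \ K`. When she has claimed some `e ∩ K`, the kernel property gives a center `C ⊆ e ∩ K` of
`2^k` sunflower edges whose petals lie in the untouched `V \ K`. The petals are disjoint boxes
of size at most `k`, so their Erdős–Selfridge potential `∑ 2^(-|petal|)` is at least `1`.
Offering one vertex from each of two boxes of equal size (these exist while no box is empty,
since distinct positive sizes have potential `< 1`), then shrinking the box Waiter entered and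
discarding the one Client blocked preserves the potential, so Waiter eventually completes a box,
i.e. an edge.
-/
variable {α : Type*} [DecidableEq α]

/-- Waiter-Client game played on the edge set `E`: Waiter has a winning strategy from the
position in which `U` is the set of unclaimed vertices and `W` is the set of vertices already
claimed by Waiter.  While at least two vertices are unclaimed, Waiter offers two distinct
unclaimed vertices `x, y`; Client claims one of them and Waiter gets the other.  A last
remaining unclaimed vertex goes to Client.  Waiter wins if at the end her vertices contain an
edge of `E`. -/
def WCWaiterWins (E : Set (Finset α)) (U W : Finset α) : Prop :=
  if _h : 2 ≤ U.card then
    ∃ x, ∃ _hx : x ∈ U, ∃ y, ∃ _hy : y ∈ U, x ≠ y ∧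
      WCWaiterWins E (U \ {x, y}) (insert x W) ∧ WCWaiterWins E (U \ {x, y}) (insert y W)
  else ∃ e ∈ E, e ⊆ W
termination_by U.card
decreasing_by all_goals exact card_sdiff_pair_lt (by assumption)

open Finset
open scoped NNReal

namespace WCWaiterWins

variable {E : Set (Finset α)}

theorem of_edge_subset {U W e : Finset α} (he : e ∈ E) (heW : e ⊆ W) : WCWaiterWins E U W := by
  rw [WCWaiterWins]
  split_ifs with hU
  · obtain ⟨x, hx, y, hy, hxy⟩ := one_lt_card.1 hU
    exact ⟨x, hx, y, hy, hxy, of_edge_subset he (heW.trans (subset_insert x W)),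
      of_edge_subset he (heW.trans (subset_insert y W))⟩
  · exact ⟨e, he, heW⟩
termination_by U.card
decreasing_by all_goals exact card_sdiff_pair_lt (by assumption)

theorem of_offer {U W : Finset α} {x y : α} (hx : x ∈ U) (hy : y ∈ U) (hxy : x ≠ y)
    (hwx : WCWaiterWins E (U \ {x, y}) (insert x W))
    (hwy : WCWaiterWins E (U \ {x, y}) (insert y W)) : WCWaiterWins E U W := by
  rw [WCWaiterWins, dif_pos (show 2 ≤ #U from one_lt_card.2 ⟨x, hx, y, hy, hxy⟩)]
  exact ⟨x, hx, y, hy, hxy, hwx, hwy⟩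

theorem offer_or_edge_subset {U W : Finset α} (h : WCWaiterWins E U W) :
    (∃ x ∈ U, ∃ y ∈ U, x ≠ y ∧ WCWaiterWins E (U \ {x, y}) (insert x W) ∧
      WCWaiterWins E (U \ {x, y}) (insert y W)) ∨ ∃ e ∈ E, e ⊆ W := by
  rw [WCWaiterWins] at h
  split_ifs at h
  · obtain ⟨x, hx, y, hy, h⟩ := h
    exact Or.inl ⟨x, hx, y, hy, h⟩
  · exact Or.inr h

theorem trace {K U W U' W' : Finset α} (h : WCWaiterWins E U W) (hU : U ∩ K ⊆ U')
    (hW : W ∩ K ⊆ W') : WCWaiterWins {f | ∃ e ∈ E, f = e ∩ K} U' W' := by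
  rcases h.offer_or_edge_subset with ⟨x, hx, y, hy, hxy, hwx, hwy⟩ | ⟨e, he, heW⟩
  · have hU_sdiff : (U \ {x, y}) ∩ K ⊆ U' := (inter_subset_inter sdiff_subset subset_rfl).trans hU
    by_cases hxK : x ∈ K
    · by_cases hyK : y ∈ K
      · have hU_offer : (U \ {x, y}) ∩ K ⊆ U' \ {x, y} := by
          rw [sdiff_inter_right_comm]
          exact sdiff_subset_sdiff hU subset_rfl
        refine of_offer (hU (mem_inter.2 ⟨hx, hxK⟩)) (hU (mem_inter.2 ⟨hy, hyK⟩)) hxy ?_ ?_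
        · refine hwx.trace hU_offer ?_
          rw [insert_inter_of_mem hxK]
          exact insert_subset_insert x hW
        · refine hwy.trace hU_offer ?_
          rw [insert_inter_of_mem hyK]
          exact insert_subset_insert y hW
      · exact hwy.trace hU_sdiff (by rwa [insert_inter_of_notMem hyK])
    · exact hwx.trace hU_sdiff (by rwa [insert_inter_of_notMem hxK])
  · exact of_edge_subset ⟨e, he, rfl⟩ ((inter_subset_inter heW subset_rfl).trans hW)
termination_by U.card
decreasing_by all_goals exact card_sdiff_pair_lt (by assumption)

theorem of_restriction {E' : Set (Finset α)} {R U W U' W' : Finset α}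
    (h : WCWaiterWins E' U' W') (hU' : U' ⊆ U) (hW' : W' ⊆ W) (hR : R ⊆ U) (hRU' : Disjoint R U')
    (hend : ∀ f ∈ E', ∀ U W : Finset α, R ⊆ U → f ⊆ W → WCWaiterWins E U W) :
    WCWaiterWins E U W := by
  rcases h.offer_or_edge_subset with ⟨x, hx, y, hy, hxy, hwx, hwy⟩ | ⟨f, hf, hfW⟩
  · have hR_offer : R ⊆ U \ {x, y} := by
      rw [subset_sdiff, disjoint_insert_right, disjoint_singleton_right]
      exact ⟨hR, disjoint_left.1 hRU'.symm hx, disjoint_left.1 hRU'.symm hy⟩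
    have hU_offer : U' \ {x, y} ⊆ U \ {x, y} := sdiff_subset_sdiff hU' subset_rfl
    have hRU_offer : Disjoint R (U' \ {x, y}) := hRU'.mono_right sdiff_subset
    exact of_offer (hU' hx) (hU' hy) hxy
      (hwx.of_restriction hU_offer (insert_subset_insert x hW') hR_offer hRU_offer hend)
      (hwy.of_restriction hU_offer (insert_subset_insert y hW') hR_offer hRU_offer hend)
  · exact hend f hf U W hR (hfW.trans hW')
termination_by U'.card
decreasing_by all_goals exact card_sdiff_pair_lt (by assumption)

end WCWaiterWins

theorem sum_inv_two_pow_lt_one {S : Finset ℕ} (h0 : 0 ∉ S) : ∑ c ∈ S, (2⁻¹ : ℝ≥0) ^ c < 1 := by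
  have hS : S ⊆ (range (S.sup id).succ).erase 0 := fun c hc =>
    mem_erase.2 ⟨fun h => h0 (h ▸ hc), subset_range_sup_succ S hc⟩
  have hgeom := geom_sum_lt (x := (2⁻¹ : ℝ≥0)) (by norm_num) (by norm_num) (S.sup id).succ
  rw [← add_sum_erase _ _ (a := 0) (by simp), pow_zero] at hgeom
  have htwo : (1 - (2⁻¹ : ℝ≥0))⁻¹ = 1 + 1 := by
    rw [tsub_eq_of_eq_add (c := 2⁻¹) (by simp [← two_mul]), inv_inv, one_add_one_eq_two]
  rw [htwo] at hgeom
  exact (sum_le_sum_of_subset hS).trans_lt (lt_of_add_lt_add_left hgeom)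

theorem exists_ne_eq_of_one_le_sum_inv_two_pow {ι : Type*} {I : Finset ι} {f : ι → ℕ}
    (hpos : ∀ i ∈ I, 0 < f i) (h : 1 ≤ ∑ i ∈ I, (2⁻¹ : ℝ≥0) ^ f i) :
    ∃ i ∈ I, ∃ j ∈ I, i ≠ j ∧ f i = f j := by
  by_contra! hinj
  have h0 : 0 ∉ I.image f := by
    simp only [mem_image, not_exists, not_and]
    exact fun i hi => (hpos i hi).ne'
  rw [← sum_image fun i hi j hj hij => by_contra fun hne => hinj i hi j hj hne hij] at h
  exact (sum_inv_two_pow_lt_one h0).not_ge h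

structure IsBoxFamily {ι : Type*} (E : Set (Finset α)) (U W : Finset α) (I : Finset ι)
    (B : ι → Finset α) : Prop where
  subset : ∀ i ∈ I, B i ⊆ U
  pairwiseDisjoint : (I : Set ι).PairwiseDisjoint B
  exists_edge_subset : ∀ i ∈ I, ∃ e ∈ E, e ⊆ W ∪ B i
  one_le_potential : 1 ≤ ∑ i ∈ I, (2⁻¹ : ℝ≥0) ^ (B i).card

namespace IsBoxFamily

variable {ι : Type*} {E : Set (Finset α)} {U W : Finset α} {I : Finset ι}
  {B : ι → Finset α}

theorem notMem_of_ne (hF : IsBoxFamily E U W I B) {i j : ι} (hi : i ∈ I) (hj : j ∈ I)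
    (hij : i ≠ j) {x : α} (hx : x ∈ B i) : x ∉ B j :=
  fun hx' => hij (hF.pairwiseDisjoint.elim_finset hi hj x hx hx')

/-- Waiter offers `x ∈ B i`, `y ∈ B j` and receives `x`: box `i` shrinks and the blocked box `j`
is dropped, which keeps the potential because `|B i| = |B j|`. -/
theorem offer [DecidableEq ι] (hF : IsBoxFamily E U W I B) {i j : ι} (hi : i ∈ I) (hj : j ∈ I)
    (hij : i ≠ j) (hcard : (B i).card = (B j).card) {x y : α} (hx : x ∈ B i) (hy : y ∈ B j) :
    IsBoxFamily E (U \ {x, y}) (insert x W) (I.erase j) fun l => B l \ {x, y} where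
  subset l hl := sdiff_subset_sdiff (hF.subset l (mem_of_mem_erase hl)) subset_rfl
  pairwiseDisjoint :=
    (hF.pairwiseDisjoint.subset (by simp)).mono fun l => sdiff_subset
  exists_edge_subset l hl := by
    obtain ⟨hlj, hl⟩ := mem_erase.1 hl
    obtain ⟨e, he, heB⟩ := hF.exists_edge_subset l hl
    refine ⟨e, he, fun a ha => ?_⟩
    have hyl : y ∉ B l := hF.notMem_of_ne hj hl (Ne.symm hlj) hy
    rcases mem_union.1 (heB ha) with haW | haB
    · exact mem_union_left _ (mem_insert_of_mem haW)
    · by_cases hax : a = x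
      · exact mem_union_left _ (hax ▸ mem_insert_self x W)
      · refine mem_union_right _ (mem_sdiff.2 ⟨haB, ?_⟩)
        simp only [mem_insert, mem_singleton, not_or]
        exact ⟨hax, fun hay => hyl (hay ▸ haB)⟩
  one_le_potential := by
    have hiI : i ∈ I.erase j := mem_erase.2 ⟨hij, hi⟩
    obtain ⟨m, hm⟩ : ∃ m, (B i).card = m + 1 :=
      ⟨_, (Nat.succ_pred_eq_of_pos (card_pos.2 ⟨x, hx⟩)).symm⟩
    have hBi : (B i \ {x, y}).card = m := by
      rw [sdiff_insert, ← erase_eq, erase_eq_of_notMem (hF.notMem_of_ne hj hi (Ne.symm hij) hy),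
        card_erase_of_mem hx, hm, Nat.add_sub_cancel]
    have hB_other : ∀ l ∈ (I.erase j).erase i, B l \ {x, y} = B l := by
      intro l hl
      obtain ⟨hli, hlj, hl⟩ := by simpa only [mem_erase] using hl
      rw [Finset.sdiff_eq_self_iff_disjoint, disjoint_insert_right, disjoint_singleton_right]
      exact ⟨hF.notMem_of_ne hi hl (Ne.symm hli) hx, hF.notMem_of_ne hj hl (Ne.symm hlj) hy⟩
    calc 1 ≤ ∑ l ∈ I, (2⁻¹ : ℝ≥0) ^ (B l).card := hF.one_le_potential
      _ = (2⁻¹ : ℝ≥0) ^ (m + 1) + (2⁻¹ : ℝ≥0) ^ (m + 1) +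
          ∑ l ∈ (I.erase j).erase i, (2⁻¹ : ℝ≥0) ^ (B l).card := by
        rw [← add_sum_erase _ _ hj, ← add_sum_erase _ _ hiI, ← hcard, hm, add_assoc]
      _ = (2⁻¹ : ℝ≥0) ^ m + ∑ l ∈ (I.erase j).erase i, (2⁻¹ : ℝ≥0) ^ (B l \ {x, y}).card := by
        rw [sum_congr rfl fun l hl => congrArg (fun s => (2⁻¹ : ℝ≥0) ^ s.card) (hB_other l hl),
          pow_succ, ← mul_add, ← two_mul, mul_inv_cancel₀ two_ne_zero, mul_one]
      _ = ∑ l ∈ I.erase j, (2⁻¹ : ℝ≥0) ^ (B l \ {x, y}).card := by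
        rw [← hBi]
        exact add_sum_erase _ (fun l => (2⁻¹ : ℝ≥0) ^ (B l \ {x, y}).card) hiI

end IsBoxFamily

namespace WCWaiterWins

variable {E : Set (Finset α)}

theorem of_isBoxFamily {ι : Type*} [DecidableEq ι] {U W : Finset α} {I : Finset ι}
    {B : ι → Finset α} (hF : IsBoxFamily E U W I B) : WCWaiterWins E U W := by
  by_cases hempty : ∃ i ∈ I, B i = ∅
  · obtain ⟨i, hi, hBi⟩ := hempty
    obtain ⟨e, he, heW⟩ := hF.exists_edge_subset i hi
    exact of_edge_subset he (by rwa [hBi, union_empty] at heW)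
  have hne : ∀ i ∈ I, (B i).Nonempty := by simpa [nonempty_iff_ne_empty] using hempty
  obtain ⟨i, hi, j, hj, hij, hcard⟩ := exists_ne_eq_of_one_le_sum_inv_two_pow
    (fun i hi => card_pos.2 (hne i hi)) hF.one_le_potential
  obtain ⟨x, hx⟩ := hne i hi
  obtain ⟨y, hy⟩ := hne j hj
  have hxU : x ∈ U := hF.subset i hi hx
  have hyU : y ∈ U := hF.subset j hj hy
  have hxy : x ≠ y := fun h => hF.notMem_of_ne hi hj hij hx (h ▸ hy)
  refine of_offer hxU hyU hxy (of_isBoxFamily (hF.offer hi hj hij hcard hx hy)) ?_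
  rw [pair_comm]
  exact of_isBoxFamily (hF.offer hj hi hij.symm hcard.symm hy hx)
termination_by U.card
decreasing_by all_goals exact card_sdiff_pair_lt (by assumption)

theorem of_sunflower {U W C : Finset α} {k ℓ : ℕ} {S : Fin ℓ → Finset α}
    (hS : IsSunflower E ℓ C S) (hk : ∀ i, (S i).card ≤ k) (hℓ : 2 ^ k ≤ ℓ) (hCW : C ⊆ W)
    (hU : ∀ i, S i \ C ⊆ U) : WCWaiterWins E U W := by
  obtain ⟨hSE, hCS, hSS⟩ := hS
  refine of_isBoxFamily (I := univ) (B := fun i => S i \ C)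
    ⟨fun i _ => hU i, ?_, fun i _ => ⟨S i, hSE i, ?_⟩, ?_⟩
  · intro i _ j _ hij
    refine disjoint_left.2 fun a hai haj => (mem_sdiff.1 hai).2 ?_
    rw [← hSS i j hij]
    exact mem_inter.2 ⟨(mem_sdiff.1 hai).1, (mem_sdiff.1 haj).1⟩
  · calc S i = C ∪ (S i \ C) := (union_sdiff_of_subset (hCS i)).symm
      _ ⊆ W ∪ (S i \ C) := union_subset_union hCW subset_rfl
  · calc (1 : ℝ≥0) = 2 ^ k • (2⁻¹ : ℝ≥0) ^ k := by simp
      _ ≤ (univ : Finset (Fin ℓ)).card • (2⁻¹ : ℝ≥0) ^ k := by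
        rw [card_univ, Fintype.card_fin]
        gcongr
      _ ≤ ∑ i, (2⁻¹ : ℝ≥0) ^ (S i \ C).card :=
        card_nsmul_le_sum _ _ _ fun i _ => pow_le_pow_of_le_one (by norm_num) (by norm_num)
          ((card_le_card sdiff_subset).trans (hk i))

end WCWaiterWins

/-- If `K` is a `2^k`-kernel of the `k`-uniform hypergraph `H = (V, E)`, then Waiter has a
winning strategy in the Waiter-Client game on `H` if and only if she has one on the trace
hypergraph `T_K(H) = (K, {e ∩ K : e ∈ E})`. -/
theorem wc_waiter_iff_trace_on_kernel (k : ℕ) (V : Finset α) (E : Set (Finset α))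
    (hEV : ∀ e ∈ E, e ⊆ V) (hunif : ∀ e ∈ E, e.card = k)
    (K : Finset α) (hK : IsKernel V E (2 ^ k) K) :
    WCWaiterWins E V ∅ ↔ WCWaiterWins {f | ∃ e ∈ E, f = e ∩ K} K ∅ := by
  refine ⟨fun h => h.trace inter_subset_right (by simp), fun h => ?_⟩
  refine h.of_restriction hK.1 (empty_subset _) sdiff_subset sdiff_disjoint ?_
  rintro _ ⟨e, he, rfl⟩ U W hVK heW
  obtain ⟨C, hC, S, hS, hSK⟩ := hK.2 e he
  refine WCWaiterWins.of_sunflower hS (fun i => (hunif _ (hS.1 i)).le) le_rfl (hC.trans heW)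
    fun i => ?_
  exact (subset_sdiff.2 ⟨sdiff_subset.trans (hEV _ (hS.1 i)), hSK i⟩).trans hVK
end
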